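/- Backward positivity of the adjoint: if λ: [0,T] → ℝ^N satisfies the adjoint system dλ_i/dt = -w_i + y_i(t)λ_i + (λ_i/x_i(t))(a_i + β Σ_j A_{ji} C_j(t)) - β Σ_j A_{ij}(1 - C_j(t))λ_j(t)/x_j(t) with terminal condition λ(T) = 0, continuous coefficients, C(t) ∈ [0,1]^N, admissible bounded controls, and w_i > 0 for all i, then λ_i(t) ≥ 0 for all t ∈ [0,T] and all i. -/

import Mathlib

/-!
Write the right-hand side of the adjoint system as `-w i + c i λ i - ∑ j, b i j λ j` with
`b ≥ 0` and `c i ≤ M i`; then `λ i' ≤ M i λ i + L i ∑ j, (λ j)⁻ - w i`. If some component were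
negative at `t₀`, take a small `δ > 0` and the last time `s ≥ t₀` at which some component `λ i`
is `≤ -δ`. After `s` every component exceeds `-δ`, so the negative mass is `O(δ)`, the forcing
`w i > 0` wins and `λ i' < M i λ i`. Thus `λ i e^{-M i t}` decreases on `[s, T]`, which is
impossible since `λ i s < 0 ≤ λ i T`.
-/

open Set Real

lemma mul_le_mul_add_mul_negPart {c m M : ℝ} (hm : m ≤ c) (hM : c ≤ M) (l : ℝ) :
    c * l ≤ M * l + (M - m) * l⁻ := by
  have hl : l = l⁺ - l⁻ := (posPart_sub_negPart l).symm
  nlinarith [posPart_nonneg l, negPart_nonneg l]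

lemma neg_sum_mul_le_mul_sum_negPart {ι : Type*} [Fintype ι] {b l : ι → ℝ} {K : ℝ}
    (hb : ∀ j, b j ∈ Icc 0 K) : -∑ j, b j * l j ≤ K * ∑ j, (l j)⁻ := by
  rw [← Finset.sum_neg_distrib, Finset.mul_sum]
  refine Finset.sum_le_sum fun j _ => ?_
  obtain ⟨hb0, hbK⟩ := hb j
  have hl : l j = (l j)⁺ - (l j)⁻ := (posPart_sub_negPart _).symm
  nlinarith [posPart_nonneg (l j), negPart_nonneg (l j)]

lemma antitoneOn_mul_exp_of_deriv_le_mul {g g' : ℝ → ℝ} {s b M : ℝ}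
    (hg : ContinuousOn g (Icc s b)) (hg' : ∀ t ∈ Ioo s b, HasDerivAt g (g' t) t)
    (hle : ∀ t ∈ Ioo s b, g' t ≤ M * g t) :
    AntitoneOn (fun t => g t * exp (-M * t)) (Icc s b) := by
  have hexp (t : ℝ) : HasDerivAt (fun r => exp (-M * r)) (exp (-M * t) * -M) t := by
    simpa using ((hasDerivAt_id t).const_mul (-M)).exp
  refine antitoneOn_of_hasDerivWithinAt_nonpos (convex_Icc s b)
    (f' := fun t => g' t * exp (-M * t) + g t * (exp (-M * t) * -M))
    (hg.mul (by fun_prop)) (fun t ht => ?_) (fun t ht => ?_)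
  · rw [interior_Icc] at ht ⊢
    exact ((hg' t ht).mul (hexp t)).hasDerivWithinAt
  · rw [interior_Icc] at ht
    nlinarith [hle t ht, exp_pos (-M * t)]

lemma exists_last_le_of_le {ι : Type*} [Finite ι] {f : ℝ → ι → ℝ} {t₀ b c : ℝ} {i₀ : ι}
    (hf : ∀ i, ContinuousOn (fun t => f t i) (Icc t₀ b)) (ht₀ : t₀ ≤ b) (hi₀ : f t₀ i₀ ≤ c) :
    ∃ s ∈ Icc t₀ b, ∃ i, f s i ≤ c ∧ ∀ t ∈ Ioc s b, ∀ j, c < f t j := by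
  set S := ⋃ i, Icc t₀ b ∩ (fun t => f t i) ⁻¹' Iic c
  have hS : IsCompact S := isCompact_Icc.of_isClosed_subset
    (isClosed_iUnion_of_finite fun i =>
      (hf i).preimage_isClosed_of_isClosed isClosed_Icc isClosed_Iic)
    (iUnion_subset fun i => inter_subset_left)
  obtain ⟨s, hsS, hs⟩ := hS.exists_isGreatest ⟨t₀, mem_iUnion.2 ⟨i₀, ⟨le_rfl, ht₀⟩, hi₀⟩⟩
  obtain ⟨i, hs_mem, hsi⟩ := mem_iUnion.1 hsS
  refine ⟨s, hs_mem, i, hsi, fun t ht j => not_le.1 fun htj => ?_⟩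
  exact (hs (mem_iUnion.2 ⟨j, ⟨hs_mem.1.trans ht.1.le, ht.2⟩, htj⟩)).not_gt ht.1

lemma exists_pos_forall_mul_lt {ι : Type*} [Finite ι] (K w : ι → ℝ) (hw : ∀ i, 0 < w i)
    {ε : ℝ} (hε : 0 < ε) : ∃ δ, 0 < δ ∧ δ ≤ ε ∧ ∀ i, K i * δ < w i := by
  have hsmall : ∀ᶠ δ in nhdsWithin 0 (Ioi 0), δ ≤ ε ∧ ∀ i, K i * δ < w i := by
    refine nhdsWithin_le_nhds
      ((eventually_le_nhds hε).and (Filter.eventually_all.2 fun i => ?_))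
    have : Filter.Tendsto (fun δ => K i * δ) (nhds 0) (nhds 0) := by
      simpa using (continuous_const_mul (K i)).tendsto 0
    exact this.eventually (eventually_lt_nhds (hw i))
  obtain ⟨δ, ⟨hδε, hδw⟩, hδ⟩ := (hsmall.and self_mem_nhdsWithin).exists
  exact ⟨δ, hδ, hδε, hδw⟩

theorem nonneg_of_deriv_le_of_nonneg_right {ι : Type*} [Fintype ι] {f f' : ℝ → ι → ℝ}
    {a b : ℝ} {M L w : ι → ℝ}
    (hf : ∀ t ∈ Icc a b, ∀ i, HasDerivWithinAt (fun s => f s i) (f' t i) (Icc a b) t)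
    (hb : ∀ i, 0 ≤ f b i) (hw : ∀ i, 0 < w i)
    (hf' : ∀ t ∈ Icc a b, ∀ i, f' t i ≤ M i * f t i + L i * ∑ j, (f t j)⁻ - w i) :
    ∀ t ∈ Icc a b, ∀ i, 0 ≤ f t i := by
  by_contra! h
  obtain ⟨t₀, ht₀, i₀, hi₀⟩ := h
  obtain ⟨δ, hδ, hδi₀, hδw⟩ :=
    exists_pos_forall_mul_lt (fun i => max (L i) 0 * Fintype.card ι) w hw (neg_pos.2 hi₀)
  have hsub : Icc t₀ b ⊆ Icc a b := Icc_subset_Icc_left ht₀.1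
  have hcont (i : ι) : ContinuousOn (fun t => f t i) (Icc a b) :=
    fun t ht => (hf t ht i).continuousWithinAt
  obtain ⟨s, hs, i, hsi, hafter⟩ := exists_last_le_of_le (c := -δ)
    (fun i => (hcont i).mono hsub) ht₀.2 (le_neg_of_le_neg hδi₀)
  have hsb : s < b := lt_of_le_of_ne hs.2 fun hsb => by linarith [hb i, hsb ▸ hsi]
  have hdecay : ∀ t ∈ Ioo s b, f' t i ≤ M i * f t i := by
    intro t ht
    have hneg : ∑ j, (f t j)⁻ ≤ Fintype.card ι * δ := by
      calc ∑ j, (f t j)⁻ ≤ ∑ _j : ι, δ := Finset.sum_le_sum fun j _ =>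
            max_le (by linarith [hafter t (Ioo_subset_Ioc_self ht) j]) hδ.le
        _ = Fintype.card ι * δ := by simp
    have htab : t ∈ Icc a b := hsub ⟨hs.1.trans ht.1.le, ht.2.le⟩
    have hL : L i * ∑ j, (f t j)⁻ ≤ max (L i) 0 * Fintype.card ι * δ := by
      rw [mul_assoc]
      exact (mul_le_mul_of_nonneg_right (le_max_left _ _)
        (Finset.sum_nonneg fun j _ => negPart_nonneg _)).trans
          (mul_le_mul_of_nonneg_left hneg (le_max_right _ _))
    linarith [hf' t htab i, hδw i]
  have hanti := antitoneOn_mul_exp_of_deriv_le_mul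
    ((hcont i).mono (Icc_subset_Icc_left (ht₀.1.trans hs.1)))
    (fun t ht => (hf t (hsub ⟨hs.1.trans ht.1.le, ht.2.le⟩) i).hasDerivAt
      (Icc_mem_nhds (ht₀.1.trans_lt (hs.1.trans_lt ht.1)) ht.2)) hdecay
  have := hanti ⟨le_rfl, hsb.le⟩ ⟨hsb.le, le_rfl⟩ hsb.le
  nlinarith [hb i, exp_pos (-M i * b), exp_pos (-M i * s)]

lemma adjoint_rhs_le {ι : Type*} [Fintype ι] {A : ι → ι → ℝ} (hA : ∀ i j, A i j ∈ Icc 0 1)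
    {a : ι → ℝ} (ha : ∀ i, 0 ≤ a i) {β : ℝ} (hβ : 0 ≤ β) (w : ι → ℝ) {x y C : ι → ℝ}
    {xlow ylow yup : ℝ} (hxl : 0 < xlow) (hx : ∀ j, xlow ≤ x j) {i : ι} (hyl : ylow ≤ y i)
    (hyu : y i ≤ yup) (hC : ∀ j, C j ∈ Icc 0 1) (l : ι → ℝ) :
    -w i + y i * l i + (l i / x i) * (a i + β * ∑ j, A j i * C j) -
        β * ∑ j, A i j * (1 - C j) * l j / x j ≤
      (yup + (a i + β * Fintype.card ι) / xlow) * l i +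
        (yup + (a i + β * Fintype.card ι) / xlow - ylow + β / xlow) * ∑ j, (l j)⁻ - w i := by
  set Mi := yup + (a i + β * Fintype.card ι) / xlow
  set q := (a i + β * ∑ j, A j i * C j) / x i
  have hq : q ∈ Icc 0 ((a i + β * Fintype.card ι) / xlow) := by
    have hAC : ∑ j, A j i * C j ∈ Icc 0 (Fintype.card ι : ℝ) := by
      have hterm (j : ι) : A j i * C j ∈ Icc (0 : ℝ) 1 :=
        ⟨mul_nonneg (hA j i).1 (hC j).1, mul_le_one₀ (hA j i).2 (hC j).1 (hC j).2⟩
      refine ⟨Finset.sum_nonneg fun j _ => (hterm j).1, ?_⟩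
      simpa using Finset.sum_le_sum fun j (_ : j ∈ Finset.univ) => (hterm j).2
    have hnum : 0 ≤ a i + β * ∑ j, A j i * C j := by nlinarith [ha i, hAC.1]
    exact ⟨div_nonneg hnum (hxl.trans_le (hx i)).le,
      div_le_div₀ (hnum.trans (by nlinarith [hAC.2])) (by nlinarith [hAC.2]) hxl (hx i)⟩
  have hdiag := mul_le_mul_add_mul_negPart (c := y i + q) (m := ylow) (M := Mi)
    (by linarith [hq.1]) (by linarith [hq.2]) (l i)
  have hcoup := neg_sum_mul_le_mul_sum_negPart (l := l) (K := β / xlow)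
    (b := fun j => β * (A i j * (1 - C j)) / x j) fun j => by
      have hp : A i j * (1 - C j) ∈ Icc (0 : ℝ) 1 :=
        ⟨mul_nonneg (hA i j).1 (by linarith [(hC j).2]),
          mul_le_one₀ (hA i j).2 (by linarith [(hC j).2]) (by linarith [(hC j).1])⟩
      exact ⟨div_nonneg (mul_nonneg hβ hp.1) (hxl.trans_le (hx j)).le,
        div_le_div₀ hβ (mul_le_of_le_one_right hβ hp.2) hxl (hx j)⟩
  have hcoup_eq : β * ∑ j, A i j * (1 - C j) * l j / x j =
      ∑ j, β * (A i j * (1 - C j)) / x j * l j := by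
    rw [Finset.mul_sum]
    exact Finset.sum_congr rfl fun j _ => by ring
  have hli : (Mi - ylow) * (l i)⁻ ≤ (Mi - ylow) * ∑ j, (l j)⁻ :=
    mul_le_mul_of_nonneg_left
      (Finset.single_le_sum (fun j _ => negPart_nonneg (l j)) (Finset.mem_univ i))
      (by linarith [hq.1, hq.2])
  have hlhs : l i / x i * (a i + β * ∑ j, A j i * C j) = q * l i := by
    simp only [q]; ring
  rw [hlhs, hcoup_eq]
  linarith

theorem stmt_15_general (N : ℕ) (T : ℝ)
    (A : Fin N → Fin N → ℝ) (hA : ∀ i j, A i j = 0 ∨ A i j = 1)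
    (a : Fin N → ℝ) (ha : ∀ i, 0 ≤ a i) (β : ℝ) (hβ : 0 < β)
    (w : Fin N → ℝ) (hw : ∀ i, 0 < w i)
    (x y : ℝ → Fin N → ℝ) (xlow ylow yup : ℝ) (hxl : 0 < xlow)
    (hx1 : ∀ t ∈ Set.Icc (0 : ℝ) T, ∀ i, xlow ≤ x t i)
    (hy1 : ∀ t ∈ Set.Icc (0 : ℝ) T, ∀ i, ylow ≤ y t i)
    (hy2 : ∀ t ∈ Set.Icc (0 : ℝ) T, ∀ i, y t i ≤ yup)
    (C : ℝ → Fin N → ℝ)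
    (hCrange : ∀ t ∈ Set.Icc (0 : ℝ) T, ∀ i, C t i ∈ Set.Icc (0 : ℝ) 1)
    (lam : ℝ → Fin N → ℝ) (hlamT : lam T = 0)
    (hadj : ∀ t ∈ Set.Icc (0 : ℝ) T, ∀ i,
      HasDerivWithinAt (fun s => lam s i)
        (-w i + y t i * lam t i +
          (lam t i / x t i) * (a i + β * ∑ j, A j i * C t j) -
          β * ∑ j, A i j * (1 - C t j) * lam t j / x t j)
        (Set.Icc 0 T) t) :
    ∀ t ∈ Set.Icc (0 : ℝ) T, ∀ i, 0 ≤ lam t i := by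
  have hA01 (i j : Fin N) : A i j ∈ Icc (0 : ℝ) 1 := by
    rcases hA i j with h | h <;> simp [h]
  exact nonneg_of_deriv_le_of_nonneg_right hadj (by simp [hlamT]) hw fun t ht i =>
    adjoint_rhs_le hA01 ha hβ.le w hxl (hx1 t ht) (hy1 t ht i) (hy2 t ht i) (hCrange t ht)
      (lam t)

theorem stmt_15 (N : ℕ) (hN : 1 ≤ N) (T : ℝ) (hT : 0 < T)
    (A : Fin N → Fin N → ℝ) (hA : ∀ i j, A i j = 0 ∨ A i j = 1)
    (a : Fin N → ℝ) (ha : ∀ i, 0 ≤ a i) (β : ℝ) (hβ : 0 < β)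
    (w : Fin N → ℝ) (hw : ∀ i, 0 < w i)
    (x y : ℝ → Fin N → ℝ) (xlow xup ylow yup : ℝ) (hxl : 0 < xlow)
    (hxc : ∀ i, ContinuousOn (fun t => x t i) (Set.Icc 0 T))
    (hyc : ∀ i, ContinuousOn (fun t => y t i) (Set.Icc 0 T))
    (hx1 : ∀ t ∈ Set.Icc (0 : ℝ) T, ∀ i, xlow ≤ x t i)
    (hx2 : ∀ t ∈ Set.Icc (0 : ℝ) T, ∀ i, x t i ≤ xup)
    (hy1 : ∀ t ∈ Set.Icc (0 : ℝ) T, ∀ i, ylow ≤ y t i)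
    (hy2 : ∀ t ∈ Set.Icc (0 : ℝ) T, ∀ i, y t i ≤ yup)
    (C : ℝ → Fin N → ℝ)
    (hCc : ∀ i, ContinuousOn (fun t => C t i) (Set.Icc 0 T))
    (hCrange : ∀ t ∈ Set.Icc (0 : ℝ) T, ∀ i, C t i ∈ Set.Icc (0 : ℝ) 1)
    (lam : ℝ → Fin N → ℝ) (hlamT : lam T = 0)
    (hadj : ∀ t ∈ Set.Icc (0 : ℝ) T, ∀ i,
      HasDerivWithinAt (fun s => lam s i)
        (-w i + y t i * lam t i +
          (lam t i / x t i) * (a i + β * ∑ j, A j i * C t j) -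
          β * ∑ j, A i j * (1 - C t j) * lam t j / x t j)
        (Set.Icc 0 T) t) :
    ∀ t ∈ Set.Icc (0 : ℝ) T, ∀ i, 0 ≤ lam t i :=
  stmt_15_general N T A hA a ha β hβ w hw x y xlow ylow yup hxl hx1 hy1 hy2 C hCrange lam hlamT hadj
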